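/- The 'Percentage' uncongestion protocol is not monotonic: there exist periods Pe1, Pe2 with Pe1 a contiguous subsequence of Pe2 such that at least half the blocks of Pe1 are uncongested but fewer than half the blocks of Pe2 are uncongested. -/
import Mathlib


/-- The Percentage protocol (with threshold 50%) is not monotonic: there are nonempty
periods `Pe1 <:+: Pe2` such that at least half the blocks of `Pe1` are uncongested
(signal `0`) but fewer than half the blocks of `Pe2` are. -/
theorem percentage_not_monotone :
    ∃ Pe1 Pe2 : List ℕ, Pe1 ≠ [] ∧ Pe2 ≠ [] ∧ Pe1 <:+: Pe2 ∧
      (Pe1.length : ℚ) / 2 ≤ (Pe1.count 0 : ℚ) ∧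
      (Pe2.count 0 : ℚ) < (Pe2.length : ℚ) / 2 := by
  refine ⟨[0], [0, 1, 1], by simp, by simp, ⟨[], [1, 1], by simp⟩, ?_, ?_⟩ <;>
    norm_num [List.count]
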